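/- arXiv:2512.23543 — 2 statements merged into one kernel-verified Lean document; each statement's English description precedes it below -/
import Mathlib

section
/- Let J be an adapted complex structure on a finite simple graph G, and let a be a non-distinguished edge of G joining the vertices x and y. Then Ja or −Ja is an edge of G adjacent to a; more precisely, at least one of the following holds: (1) Jx or −Jx is a non-isolated vertex x' of G, the edge joining y and x' exists in G, and Ja equals that edge up to sign; or (2) Jy or −Jy is a non-isolated vertex y' of G, the edge joining x and y' exists in G, and Ja equals that edge up to sign. -/
/-!  Framework: the 2-step nilpotent Lie algebra `𝔫_G` associated to a finite simple
graph `G` (Dani–Mainkar construction), and adapted complex structures on it. -/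

open scoped BigOperators

namespace GraphLie

variable {V : Type*} [Fintype V] [LinearOrder V]

/-- The underlying real vector space of the Lie algebra `𝔫_G` associated to a graph `G`:
real-valued functions on its basis `V ⊕ G.edgeSet` (vertices and edges). -/
abbrev Niln (G : SimpleGraph V) : Type _ := (V ⊕ G.edgeSet) → ℝ

variable (G : SimpleGraph V) [DecidableRel G.Adj]

/-- The basis vector of `𝔫_G` corresponding to the vertex `v`. -/
noncomputable def vtx (v : V) : Niln G := Pi.single (Sum.inl v) 1

/-- The basis vector of `𝔫_G` corresponding to the edge `e`. -/
noncomputable def edg (e : G.edgeSet) : Niln G := Pi.single (Sum.inr e) 1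

/-- The basis vector of `𝔫_G` corresponding to a vertex or an edge. -/
noncomputable def basisVec (b : V ⊕ G.edgeSet) : Niln G := Pi.single b 1

/-- The bracket of two vertex generators: for adjacent vertices `i < j` (with respect to
the chosen labeling of the vertices) `[v_i, v_j] = e_{i,j}` and `[v_j, v_i] = -e_{i,j}`;
non-adjacent vertices commute. -/
noncomputable def bracketVtx (i j : V) : Niln G :=
  if h : G.Adj i j then
    (if i < j then edg G ⟨s(i, j), G.mem_edgeSet.mpr h⟩
     else - edg G ⟨s(i, j), G.mem_edgeSet.mpr h⟩)
  else 0

/-- The Lie bracket of `𝔫_G`, extended bilinearly from the generators; all the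
edge generators are central. -/
noncomputable def bracket (x y : Niln G) : Niln G :=
  ∑ i : V, ∑ j : V, (x (Sum.inl i) * y (Sum.inl j)) • bracketVtx G i j

/-- An adapted complex structure on the graph `G`: a linear endomorphism `J` of `𝔫_G`
with `J ∘ J = -id`, whose Nijenhuis tensor vanishes, and which sends each basis vector
(vertex or edge) to plus or minus a basis vector. -/
structure AdaptedCS : Type _ where
  J : Niln G →ₗ[ℝ] Niln G
  j_squared : ∀ x, J (J x) = -x
  integrable : ∀ x y,
    bracket G x y + J (bracket G (J x) y + bracket G x (J y)) - bracket G (J x) (J y) = 0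
  adapted : ∀ b : V ⊕ G.edgeSet,
    (∃ b', J (basisVec G b) = basisVec G b') ∨ (∃ b', J (basisVec G b) = - basisVec G b')

variable {G}

/-- An edge of `G` joining vertices `v` and `w` is distinguished if `Jv = w` or `Jw = v`. -/
def AdaptedCS.Distinguished (Jc : AdaptedCS G) (e : G.edgeSet) : Prop :=
  ∃ v w : V, (e : Sym2 V) = s(v, w) ∧
    (Jc.J (vtx G v) = vtx G w ∨ Jc.J (vtx G w) = vtx G v)

end GraphLie

/-! The proof evaluates the Nijenhuis condition `N_J(x, y) = 0` at the `a`-coordinate.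
There `[x, y] = ±a` contributes `±1`. The vector `Jx` is a signed basis vector different from
`±x` (as `J² = -1`) and from `±y` (as `a` is not distinguished), so `[Jx, Jy]` has no
`a`-component. Hence `J[Jx, y]` or `J[x, Jy]` has a nonzero `a`-component. Since `J` permutes
the basis up to sign, this forces `Jx` (resp. `Jy`) to be a signed vertex `x'` adjacent to `y`
(resp. `x`), with `J` exchanging `a` and the edge `{x', y}` up to sign. -/

namespace GraphLie

def EqUpToSign {M : Type*} [Neg M] (u v : M) : Prop := u = v ∨ u = -v

namespace EqUpToSign

variable {M N : Type*}

theorem refl [Neg M] (u : M) : EqUpToSign u u := Or.inl rfl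

theorem map [AddGroup M] [AddGroup N] {F : Type*} [FunLike F M N] [AddMonoidHomClass F M N]
    (f : F) {u v : M} (h : EqUpToSign u v) : EqUpToSign (f u) (f v) :=
  h.imp (congrArg f) fun h => by rw [h, map_neg]

theorem apply {ι : Type*} {R : ι → Type*} [∀ i, Neg (R i)] {u v : ∀ i, R i}
    (h : EqUpToSign u v) (i : ι) : EqUpToSign (u i) (v i) :=
  h.imp (congrFun · i) (congrFun · i)

theorem ne_zero_iff [AddGroup M] {u v : M} (h : EqUpToSign u v) : u ≠ 0 ↔ v ≠ 0 := by
  rcases h with rfl | rfl <;> simp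

end EqUpToSign

variable {V : Type*} [Fintype V] [LinearOrder V] {G : SimpleGraph V} [DecidableRel G.Adj]

section Bracket

theorem bracket_vtx_vtx (v w : V) : bracket G (vtx G v) (vtx G w) = bracketVtx G v w := by
  simp [bracket, vtx, Pi.single_apply, ite_smul]

theorem bracket_edg_left (e : G.edgeSet) (w : Niln G) : bracket G (edg G e) w = 0 := by
  simp [bracket, edg]

theorem bracket_edg_right (e : G.edgeSet) (u : Niln G) : bracket G u (edg G e) = 0 := by
  simp [bracket, edg]

theorem bracket_neg_left (u w : Niln G) : bracket G (-u) w = -bracket G u w := by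
  simp [bracket, Finset.sum_neg_distrib]

theorem bracket_neg_right (u w : Niln G) : bracket G u (-w) = -bracket G u w := by
  simp [bracket, Finset.sum_neg_distrib]

theorem EqUpToSign.bracket {u u' w w' : Niln G} (hu : EqUpToSign u u') (hw : EqUpToSign w w') :
    EqUpToSign (bracket G u w) (bracket G u' w') := by
  rcases hu with rfl | rfl <;> rcases hw with rfl | rfl <;>
    simp [EqUpToSign, bracket_neg_left, bracket_neg_right]

omit [Fintype V] in
theorem bracketVtx_eqUpToSign_edg {p q : V} (h : G.Adj p q) :
    EqUpToSign (bracketVtx G p q) (edg G ⟨s(p, q), G.mem_edgeSet.mpr h⟩) := by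
  unfold bracketVtx
  rw [dif_pos h]
  split_ifs
  · exact Or.inl rfl
  · exact Or.inr rfl

omit [Fintype V] in
theorem bracketVtx_apply_inr_of_ne {p q : V} {e : G.edgeSet} (h : (e : Sym2 V) ≠ s(p, q)) :
    bracketVtx G p q (Sum.inr e) = 0 := by
  unfold bracketVtx
  split_ifs <;> simp [edg, Subtype.ext_iff, Ne.symm h]

theorem bracket_apply_inr_eq_zero {u : Niln G} {x y : V} (hx : u (Sum.inl x) = 0)
    (hy : u (Sum.inl y) = 0) (w : Niln G) {a : G.edgeSet} (ha : (a : Sym2 V) = s(x, y)) :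
    bracket G u w (Sum.inr a) = 0 := by
  simp only [bracket, Finset.sum_apply, Pi.smul_apply, smul_eq_mul]
  refine Finset.sum_eq_zero fun i _ => Finset.sum_eq_zero fun j _ => ?_
  by_cases hi : i = x ∨ i = y
  · rcases hi with rfl | rfl <;> simp [hx, hy]
  · rw [bracketVtx_apply_inr_of_ne, mul_zero]
    rw [ha]
    intro h
    exact hi (Sym2.mem_iff.mp (h ▸ Sym2.mem_mk_left i j))

end Bracket

namespace AdaptedCS

variable (Jc : AdaptedCS G)

theorem J_basisVec_eqUpToSign (b : V ⊕ G.edgeSet) :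
    ∃ b', EqUpToSign (Jc.J (basisVec G b)) (basisVec G b') := by
  rcases Jc.adapted b with ⟨b', h⟩ | ⟨b', h⟩
  exacts [⟨b', Or.inl h⟩, ⟨b', Or.inr h⟩]

theorem J_eqUpToSign_symm {u v : Niln G} (h : EqUpToSign (Jc.J u) v) :
    EqUpToSign (Jc.J v) u := by
  rcases h with h | h
  · exact Or.inr (by rw [← h, Jc.j_squared])
  · exact Or.inl (by rw [← neg_eq_iff_eq_neg.mpr h, map_neg, Jc.j_squared, neg_neg])

theorem eq_zero_of_J_eqUpToSign_self {u : Niln G} (h : EqUpToSign (Jc.J u) u) : u = 0 := by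
  have hJJ := Jc.j_squared u
  rcases h with h | h
  · rw [h, h] at hJJ
    exact self_eq_neg.mp hJJ
  · rw [h, map_neg, h, neg_neg] at hJJ
    exact self_eq_neg.mp hJJ

theorem J_basisVec_eqUpToSign_of_apply_ne_zero {b c : V ⊕ G.edgeSet}
    (h : Jc.J (basisVec G b) c ≠ 0) : EqUpToSign (Jc.J (basisVec G b)) (basisVec G c) := by
  obtain ⟨b', hb'⟩ := Jc.J_basisVec_eqUpToSign b
  obtain rfl : c = b' := by
    by_contra hne
    exact (hb'.apply c).ne_zero_iff.mp h (by simp [basisVec, hne])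
  exact hb'

theorem J_basisVec_apply_self (b : V ⊕ G.edgeSet) : Jc.J (basisVec G b) b = 0 := by
  by_contra h
  have := Jc.eq_zero_of_J_eqUpToSign_self (Jc.J_basisVec_eqUpToSign_of_apply_ne_zero h)
  simp [basisVec] at this

theorem distinguished_of_J_vtx_eqUpToSign {v w : V} (h : EqUpToSign (Jc.J (vtx G v)) (vtx G w))
    {a : G.edgeSet} (ha : (a : Sym2 V) = s(v, w)) : Jc.Distinguished a := by
  refine ⟨v, w, ha, ?_⟩
  rcases h with h | h
  · exact Or.inl h
  · have hJJ := Jc.j_squared (vtx G v)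
    rw [h, map_neg, neg_inj] at hJJ
    exact Or.inr hJJ

theorem exists_edge_of_J_bracket_apply_ne_zero {u w : Niln G} {b c : V ⊕ G.edgeSet}
    (hu : EqUpToSign u (basisVec G b)) (hw : EqUpToSign w (basisVec G c)) {a : G.edgeSet}
    (h : Jc.J (bracket G u w) (Sum.inr a) ≠ 0) :
    ∃ p q : V, b = Sum.inl p ∧ c = Sum.inl q ∧
      ∃ e : G.edgeSet, (e : Sym2 V) = s(p, q) ∧ EqUpToSign (Jc.J (edg G a)) (edg G e) := by
  replace h := (((hu.bracket hw).map Jc.J).apply _).ne_zero_iff.mp h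
  rcases c with q | f
  swap
  · exact absurd (bracket_edg_right (G := G) f _ ▸ h) (by simp)
  rcases b with p | e
  swap
  · exact absurd (bracket_edg_left (G := G) e _ ▸ h) (by simp)
  refine ⟨p, q, rfl, rfl, ?_⟩
  change Jc.J (bracket G (vtx G p) (vtx G q)) _ ≠ 0 at h
  rw [bracket_vtx_vtx] at h
  by_cases hpq : G.Adj p q
  · refine ⟨⟨s(p, q), G.mem_edgeSet.mpr hpq⟩, rfl, Jc.J_eqUpToSign_symm ?_⟩
    apply Jc.J_basisVec_eqUpToSign_of_apply_ne_zero
    exact (((bracketVtx_eqUpToSign_edg hpq).map Jc.J).apply _).ne_zero_iff.mp h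
  · simp [bracketVtx, hpq] at h

end AdaptedCS

/-- If `a` is a non-distinguished edge of `G` joining the vertices `x`
and `y`, then `±Ja` is an edge of `G` adjacent to `a`: either `±Jx` is a non-isolated
vertex `x'`, the edge joining `y` and `x'` exists in `G`, and `Ja` equals that edge up to
sign; or `±Jy` is a non-isolated vertex `y'`, the edge joining `x` and `y'` exists in
`G`, and `Ja` equals that edge up to sign. -/
theorem statement6 (Jc : AdaptedCS G) (a : G.edgeSet) (x y : V)
    (hxy : (a : Sym2 V) = s(x, y)) (hnd : ¬ Jc.Distinguished a) :
    (∃ x' : V, 0 < G.degree x' ∧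
        (Jc.J (vtx G x) = vtx G x' ∨ Jc.J (vtx G x) = - vtx G x') ∧
        ∃ b : G.edgeSet, (b : Sym2 V) = s(y, x') ∧
          (Jc.J (edg G a) = edg G b ∨ Jc.J (edg G a) = - edg G b)) ∨
    (∃ y' : V, 0 < G.degree y' ∧
        (Jc.J (vtx G y) = vtx G y' ∨ Jc.J (vtx G y) = - vtx G y') ∧
        ∃ b : G.edgeSet, (b : Sym2 V) = s(x, y') ∧
          (Jc.J (edg G a) = edg G b ∨ Jc.J (edg G a) = - edg G b)) := by
  have hadj : G.Adj x y := G.mem_edgeSet.mp (hxy ▸ a.2)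
  obtain ⟨bx, hbx⟩ := Jc.J_basisVec_eqUpToSign (Sum.inl x)
  obtain ⟨cy, hcy⟩ := Jc.J_basisVec_eqUpToSign (Sum.inl y)
  have hJx_y : Jc.J (vtx G x) (Sum.inl y) = 0 := by
    by_contra h
    exact hnd (Jc.distinguished_of_J_vtx_eqUpToSign
      (Jc.J_basisVec_eqUpToSign_of_apply_ne_zero h) hxy)
  have hJxJy : bracket G (Jc.J (vtx G x)) (Jc.J (vtx G y)) (Sum.inr a) = 0 :=
    bracket_apply_inr_eq_zero (Jc.J_basisVec_apply_self _) hJx_y _ hxy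
  have hxy_ne : bracket G (vtx G x) (vtx G y) (Sum.inr a) ≠ 0 := by
    have ha : (⟨s(x, y), G.mem_edgeSet.mpr hadj⟩ : G.edgeSet) = a := Subtype.ext hxy.symm
    rw [bracket_vtx_vtx, ((bracketVtx_eqUpToSign_edg hadj).apply _).ne_zero_iff, ha]
    simp [edg]
  have hN := congrFun (Jc.integrable (vtx G x) (vtx G y)) (Sum.inr a)
  simp only [Pi.add_apply, Pi.sub_apply, map_add, hJxJy, sub_zero, Pi.zero_apply] at hN
  have hJ : Jc.J (bracket G (Jc.J (vtx G x)) (vtx G y)) (Sum.inr a) ≠ 0 ∨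
      Jc.J (bracket G (vtx G x) (Jc.J (vtx G y))) (Sum.inr a) ≠ 0 := by
    by_contra! h
    rw [h.1, h.2, add_zero, add_zero] at hN
    exact hxy_ne hN
  rcases hJ with h | h
  · obtain ⟨x', _, rfl, ⟨⟩, e, he, hJa⟩ :=
      Jc.exists_edge_of_J_bracket_apply_ne_zero hbx (.refl (basisVec G (Sum.inl y))) h
    have hx'y : G.Adj x' y := G.mem_edgeSet.mp (he ▸ e.2)
    exact Or.inl ⟨x', G.degree_pos_iff_exists_adj x' |>.2 ⟨y, hx'y⟩, hbx, e,
      he.trans Sym2.eq_swap, hJa⟩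
  · obtain ⟨_, y', ⟨⟩, rfl, e, he, hJa⟩ :=
      Jc.exists_edge_of_J_bracket_apply_ne_zero (.refl (basisVec G (Sum.inl x))) hcy h
    have hxy' : G.Adj x y' := G.mem_edgeSet.mp (he ▸ e.2)
    exact Or.inr ⟨y', G.degree_pos_iff_exists_adj y' |>.2 ⟨x, hxy'.symm⟩, hcy, e, he, hJa⟩

end GraphLie
end

section
/- Let J be an adapted complex structure on a finite simple graph G. If w is a vertex of G of odd degree, then Jw or −Jw is a vertex of G of odd degree; in particular, the set of odd-degree vertices of G is invariant under J up to sign. -/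
/-!  Framework: the 2-step nilpotent Lie algebra `𝔫_G` associated to a finite simple
graph `G` (Dani–Mainkar construction), and adapted complex structures on it. -/

open scoped BigOperators

namespace GraphLie

variable {V : Type*} [Fintype V] [LinearOrder V] {G : SimpleGraph V} [DecidableRel G.Adj]

section Aux

set_option linter.unusedSectionVars false

open Finset

lemma basisVec_apply (b c : V ⊕ G.edgeSet) : basisVec G b c = if c = b then 1 else 0 := by
  simp [basisVec, Pi.single_apply]

lemma vtx_def (v : V) : vtx G v = basisVec G (Sum.inl v) := rfl

lemma basisVec_ne_zero (b : V ⊕ G.edgeSet) : basisVec G b ≠ 0 := by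
  intro h
  have := congrFun h b
  simp [basisVec_apply] at this

lemma basis_expansion (x : Niln G) : ∑ b, x b • basisVec G b = x := by
  ext c
  simp [Finset.sum_apply, basisVec_apply, mul_ite]

lemma bracket_vtx_vtx_s8 (i j : V) :
    bracket G (basisVec G (Sum.inl i)) (basisVec G (Sum.inl j)) = bracketVtx G i j := by
  unfold bracket
  simp [basisVec_apply, ite_smul, zero_smul, mul_ite, mul_one, mul_zero, ite_mul, one_mul,
    zero_mul]

lemma bracket_smul_left (a : ℝ) (x y : Niln G) : bracket G (a • x) y = a • bracket G x y := by
  unfold bracket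
  simp [Finset.smul_sum, smul_smul, mul_assoc]

lemma bracket_smul_right (a : ℝ) (x y : Niln G) : bracket G x (a • y) = a • bracket G x y := by
  unfold bracket
  simp [Finset.smul_sum, smul_smul, mul_left_comm]

lemma bracket_inr_left (f : G.edgeSet) (y : Niln G) :
    bracket G (basisVec G (Sum.inr f)) y = 0 := by
  unfold bracket
  simp [basisVec_apply]

lemma bracket_inr_right (f : G.edgeSet) (x : Niln G) :
    bracket G x (basisVec G (Sum.inr f)) = 0 := by
  unfold bracket
  simp [basisVec_apply]

lemma bracketVtx_of_adj {i j : V} (h : G.Adj i j) :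
    bracketVtx G i j =
      (if i < j then (1:ℝ) else -1) • basisVec G (Sum.inr ⟨s(i,j), G.mem_edgeSet.mpr h⟩) := by
  unfold bracketVtx
  rw [dif_pos h]
  split_ifs <;> simp [edg, basisVec]

lemma bracketVtx_of_not_adj {i j : V} (h : ¬ G.Adj i j) : bracketVtx G i j = 0 := dif_neg h

lemma bracketVtx_support {i j : V} {c : V ⊕ G.edgeSet} (h : bracketVtx G i j c ≠ 0) :
    ∃ hadj : G.Adj i j, c = Sum.inr ⟨s(i,j), G.mem_edgeSet.mpr hadj⟩ := by
  by_cases hadj : G.Adj i j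
  · refine ⟨hadj, ?_⟩
    by_contra hc
    apply h
    rw [bracketVtx_of_adj hadj]
    simp [basisVec_apply, hc]
  · rw [bracketVtx_of_not_adj hadj] at h; simp at h

open Classical in
/-- number of nonzero coordinates -/
noncomputable def cnt (x : Niln G) : ℕ := (Finset.univ.filter fun b => x b ≠ 0).card

lemma cnt_congr {x y : Niln G} (h : ∀ b, x b ≠ 0 ↔ y b ≠ 0) : cnt x = cnt y := by
  unfold cnt
  congr 1
  ext b
  simp [h b]

lemma cnt_zero : cnt (0 : Niln G) = 0 := by
  unfold cnt
  simp

lemma cnt_smul {a : ℝ} (ha : a ≠ 0) (x : Niln G) : cnt (a • x) = cnt x := by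
  refine cnt_congr fun b => ?_
  simp [Pi.smul_apply, smul_eq_mul, mul_eq_zero, ha]

lemma cnt_neg (x : Niln G) : cnt (-x) = cnt x := by
  have : -x = (-1 : ℝ) • x := by simp
  rw [this, cnt_smul (by norm_num)]

lemma cnt_basisVec (b : V ⊕ G.edgeSet) : cnt (basisVec G b) = 1 := by
  classical
  unfold cnt
  have : (Finset.univ.filter fun c => basisVec G b c ≠ 0) = {b} := by
    ext c
    simp [basisVec_apply]
  rw [this, Finset.card_singleton]

lemma cnt_add_disjoint {x y : Niln G} (h : ∀ b, x b = 0 ∨ y b = 0) :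
    cnt (x + y) = cnt x + cnt y := by
  classical
  unfold cnt
  have hdis : Disjoint (Finset.univ.filter fun b => x b ≠ 0)
      (Finset.univ.filter fun b => y b ≠ 0) := by
    rw [Finset.disjoint_filter]
    intro b _ hx hy
    rcases h b with h' | h' <;> simp_all
  have hun : (Finset.univ.filter fun b => (x + y) b ≠ 0)
      = (Finset.univ.filter fun b => x b ≠ 0) ∪ (Finset.univ.filter fun b => y b ≠ 0) := by
    ext b
    rcases h b with h' | h' <;> simp [Pi.add_apply, h']
  rw [hun, Finset.card_union_of_disjoint hdis]

lemma cnt_bracketVtx (i j : V) :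
    cnt (bracketVtx G i j) = if G.Adj i j then 1 else 0 := by
  by_cases h : G.Adj i j
  · rw [bracketVtx_of_adj h, cnt_smul (by split_ifs <;> norm_num), cnt_basisVec, if_pos h]
  · rw [bracketVtx_of_not_adj h, cnt_zero, if_neg h]

lemma bracketVtx_disj {i j p q : V} (h : s(i,j) ≠ (s(p,q) : Sym2 V)) (a c : ℝ) :
    ∀ b, (a • bracketVtx G i j) b = 0 ∨ (c • bracketVtx G p q) b = 0 := by
  intro b
  by_contra hc
  push_neg at hc
  have h1 : bracketVtx G i j b ≠ 0 := by
    intro h0; apply hc.1; simp [Pi.smul_apply, h0]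
  have h2 : bracketVtx G p q b ≠ 0 := by
    intro h0; apply hc.2; simp [Pi.smul_apply, h0]
  obtain ⟨ha1, hb1⟩ := bracketVtx_support h1
  obtain ⟨ha2, hb2⟩ := bracketVtx_support h2
  rw [hb1] at hb2
  apply h
  have := Sum.inr.inj hb2
  exact congrArg Subtype.val this

lemma cnt_pair {i j p q : V} (h : s(i,j) ≠ (s(p,q) : Sym2 V)) {a c : ℝ}
    (ha : a ≠ 0) (hc : c ≠ 0) :
    cnt (a • bracketVtx G i j + c • bracketVtx G p q)
      = (if G.Adj i j then 1 else 0) + (if G.Adj p q then 1 else 0) := by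
  rw [cnt_add_disjoint (bracketVtx_disj h a c), cnt_smul ha, cnt_smul hc,
    cnt_bracketVtx, cnt_bracketVtx]

section JStuff

variable (Jc : AdaptedCS G)

lemma J_inj : Function.Injective Jc.J := by
  intro x y h
  have hx := Jc.j_squared x
  have hy := Jc.j_squared y
  have : Jc.J (Jc.J x) = Jc.J (Jc.J y) := by rw [h]
  rw [hx, hy] at this
  exact neg_injective this

lemma exists_signed (b : V ⊕ G.edgeSet) :
    ∃ p : (V ⊕ G.edgeSet) × ℝ, (p.2 = 1 ∨ p.2 = -1) ∧
      Jc.J (basisVec G b) = p.2 • basisVec G p.1 := by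
  rcases Jc.adapted b with ⟨b', h⟩ | ⟨b', h⟩
  · exact ⟨(b', 1), Or.inl rfl, by simp [h]⟩
  · exact ⟨(b', -1), Or.inr rfl, by simp [h]⟩

noncomputable def idx (b : V ⊕ G.edgeSet) : V ⊕ G.edgeSet := (exists_signed Jc b).choose.1

noncomputable def sgn (b : V ⊕ G.edgeSet) : ℝ := (exists_signed Jc b).choose.2

lemma sgn_eq (b : V ⊕ G.edgeSet) : sgn Jc b = 1 ∨ sgn Jc b = -1 :=
  (exists_signed Jc b).choose_spec.1

lemma sgn_ne_zero (b : V ⊕ G.edgeSet) : sgn Jc b ≠ 0 := by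
  rcases sgn_eq Jc b with h | h <;> rw [h] <;> norm_num

lemma J_basis (b : V ⊕ G.edgeSet) :
    Jc.J (basisVec G b) = sgn Jc b • basisVec G (idx Jc b) :=
  (exists_signed Jc b).choose_spec.2

lemma eq_of_J_basis {b c : V ⊕ G.edgeSet} {s : ℝ} (hs : s ≠ 0)
    (h : Jc.J (basisVec G b) = s • basisVec G c) : idx Jc b = c ∧ sgn Jc b = s := by
  have h2 := (J_basis Jc b).symm.trans h
  have h3 := congrFun h2 (idx Jc b)
  simp [Pi.smul_apply, basisVec_apply] at h3
  by_cases he : idx Jc b = c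
  · rw [if_pos he] at h3
    exact ⟨he, h3⟩
  · rw [if_neg he] at h3
    exact absurd h3 (sgn_ne_zero Jc b)

lemma idx_inj : Function.Injective (idx Jc) := by
  intro b1 b2 h
  by_contra hne
  have h1 := J_basis Jc b1
  have h2 := J_basis Jc b2
  rw [h] at h1
  have h0 : Jc.J (sgn Jc b2 • basisVec G b1 - sgn Jc b1 • basisVec G b2) = 0 := by
    rw [map_sub, map_smul, map_smul, h1, h2, smul_smul, smul_smul, mul_comm, sub_self]
  have h4 : sgn Jc b2 • basisVec G b1 - sgn Jc b1 • basisVec G b2 = 0 :=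
    J_inj Jc (by rw [h0, map_zero])
  have h5 := congrFun h4 b1
  simp [Pi.sub_apply, Pi.smul_apply, basisVec_apply, hne] at h5
  exact sgn_ne_zero Jc b2 h5

lemma idx_surj : Function.Surjective (idx Jc) :=
  Finite.injective_iff_surjective.mp (idx_inj Jc)

lemma J_apply_idx (x : Niln G) (b : V ⊕ G.edgeSet) :
    Jc.J x (idx Jc b) = sgn Jc b * x b := by
  conv_lhs => rw [← basis_expansion x]
  rw [map_sum]
  simp only [map_smul, J_basis]
  rw [Finset.sum_apply]
  rw [Finset.sum_eq_single b]
  · simp [Pi.smul_apply, basisVec_apply, mul_comm]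
  · intro c _ hc
    have hne : idx Jc b ≠ idx Jc c := fun h => hc ((idx_inj Jc h).symm)
    simp [Pi.smul_apply, basisVec_apply, hne]
  · intro h
    exact absurd (Finset.mem_univ b) h

lemma cnt_J (x : Niln G) : cnt (Jc.J x) = cnt x := by
  classical
  unfold cnt
  rw [← Finset.card_image_of_injective (Finset.univ.filter fun b => x b ≠ 0) (idx_inj Jc)]
  congr 1
  ext c
  simp only [Finset.mem_image, Finset.mem_filter, Finset.mem_univ, true_and]
  constructor
  · intro hc
    obtain ⟨b, rfl⟩ := idx_surj Jc c
    rw [J_apply_idx] at hc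
    exact ⟨b, by intro h; apply hc; rw [h, mul_zero], rfl⟩
  · rintro ⟨b, hb, rfl⟩
    rw [J_apply_idx]
    exact mul_ne_zero (sgn_ne_zero Jc b) hb

lemma cnt_eq_of_J {x y : Niln G} (h : Jc.J x = y) : cnt x = cnt y := by
  rw [← h, cnt_J]

lemma add_eq_zero_vec {A X : Niln G} (h : A + X = 0) : X = -A := by
  have h' := congrArg (fun z => -A + z) h
  simpa [← add_assoc] using h'

variable (Jc : AdaptedCS G)

lemma J_basis_idx (b : V ⊕ G.edgeSet) :
    Jc.J (basisVec G (idx Jc b)) = (-(sgn Jc b)) • basisVec G b := by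
  have h := congrArg Jc.J (J_basis Jc b)
  rw [Jc.j_squared, map_smul] at h
  have hs2 : sgn Jc b * sgn Jc b = 1 := by
    rcases sgn_eq Jc b with h' | h' <;> rw [h'] <;> norm_num
  have h2 := congrArg (fun z => sgn Jc b • z) h
  simp only [smul_smul, hs2, one_smul] at h2
  rw [← h2, smul_neg, ← neg_smul]

lemma idx_idx (b : V ⊕ G.edgeSet) : idx Jc (idx Jc b) = b :=
  (eq_of_J_basis Jc (by simpa using sgn_ne_zero Jc b) (J_basis_idx Jc b)).1

lemma idx_ne_self (b : V ⊕ G.edgeSet) : idx Jc b ≠ b := by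
  intro h
  have h1 := J_basis Jc b
  have h2 := J_basis_idx Jc b
  rw [h, h1, h] at h2
  have h3 := congrFun h2 b
  simp [Pi.smul_apply, basisVec_apply] at h3
  exact sgn_ne_zero Jc b (by linarith)

lemma nij (i j : V) :
    bracketVtx G i j + Jc.J (bracket G (Jc.J (basisVec G (Sum.inl i))) (basisVec G (Sum.inl j))
        + bracket G (basisVec G (Sum.inl i)) (Jc.J (basisVec G (Sum.inl j))))
      - bracket G (Jc.J (basisVec G (Sum.inl i))) (Jc.J (basisVec G (Sum.inl j))) = 0 := by
  have h := Jc.integrable (basisVec G (Sum.inl i)) (basisVec G (Sum.inl j))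
  rwa [bracket_vtx_vtx_s8] at h

lemma bracketVtx_ne_zero_of_adj {i j : V} (h : G.Adj i j) : bracketVtx G i j ≠ 0 := by
  intro h0
  have hc := cnt_bracketVtx (G := G) i j
  rw [h0, cnt_zero, if_pos h] at hc
  exact absurd hc (by norm_num)

lemma scenarioA1 {i j : V} {f f' : G.edgeSet} (hi : idx Jc (Sum.inl i) = Sum.inr f)
    (hj : idx Jc (Sum.inl j) = Sum.inr f') : ¬ G.Adj i j := by
  have h := nij Jc i j
  rw [J_basis Jc (Sum.inl i), J_basis Jc (Sum.inl j), hi, hj] at h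
  simp only [bracket_smul_left, bracket_smul_right, bracket_inr_left, bracket_inr_right,
    smul_zero, zero_add, add_zero, map_zero, sub_zero] at h
  exact fun hadj => bracketVtx_ne_zero_of_adj hadj h

lemma scenarioA2 {i j k : V} {f : G.edgeSet} (hi : idx Jc (Sum.inl i) = Sum.inr f)
    (hj : idx Jc (Sum.inl j) = Sum.inl k) : (G.Adj i j ↔ G.Adj i k) := by
  have h := nij Jc i j
  rw [J_basis Jc (Sum.inl i), J_basis Jc (Sum.inl j), hi, hj] at h
  simp only [bracket_smul_left, bracket_smul_right, bracket_inr_left, bracket_vtx_vtx_s8,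
    smul_zero, zero_add, add_zero, sub_zero] at h
  have h2 := add_eq_zero_vec h
  have h3 := cnt_eq_of_J Jc h2
  rw [cnt_smul (sgn_ne_zero Jc (Sum.inl j)), cnt_neg, cnt_bracketVtx, cnt_bracketVtx] at h3
  by_cases p1 : G.Adj i j <;> by_cases p2 : G.Adj i k <;> simp [p1, p2] at h3 ⊢ <;> tauto

lemma scenarioB {i i' j : V} {f : G.edgeSet} (hi : idx Jc (Sum.inl i) = Sum.inl i')
    (hj : idx Jc (Sum.inl j) = Sum.inr f) : (G.Adj i j ↔ G.Adj i' j) := by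
  have h := nij Jc i j
  rw [J_basis Jc (Sum.inl i), J_basis Jc (Sum.inl j), hi, hj] at h
  simp only [bracket_smul_left, bracket_smul_right, bracket_inr_left, bracket_inr_right,
    bracket_vtx_vtx_s8, smul_zero, zero_add, add_zero, sub_zero] at h
  have h2 := add_eq_zero_vec h
  have h3 := cnt_eq_of_J Jc h2
  rw [cnt_smul (sgn_ne_zero Jc (Sum.inl i)), cnt_neg, cnt_bracketVtx, cnt_bracketVtx] at h3
  by_cases p1 : G.Adj i j <;> by_cases p2 : G.Adj i' j <;> simp [p1, p2] at h3 ⊢ <;> tauto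

lemma scenarioC {i i' j k : V} (hi : idx Jc (Sum.inl i) = Sum.inl i')
    (hj : idx Jc (Sum.inl j) = Sum.inl k)
    (hne1 : s(i', j) ≠ (s(i, k) : Sym2 V)) (hne2 : s(i', k) ≠ (s(i, j) : Sym2 V)) :
    (if G.Adj i' j then 1 else 0) + (if G.Adj i k then 1 else 0)
      = ((if G.Adj i' k then 1 else 0) + (if G.Adj i j then 1 else 0) : ℕ) := by
  have h := nij Jc i j
  rw [J_basis Jc (Sum.inl i), J_basis Jc (Sum.inl j), hi, hj] at h
  simp only [bracket_smul_left, bracket_smul_right, bracket_vtx_vtx_s8, smul_smul] at h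
  have h1 : bracketVtx G i j
      + Jc.J (sgn Jc (Sum.inl i) • bracketVtx G i' j + sgn Jc (Sum.inl j) • bracketVtx G i k)
      = (sgn Jc (Sum.inl j) * sgn Jc (Sum.inl i)) • bracketVtx G i' k := by
    rwa [sub_eq_zero] at h
  have h2 := eq_sub_of_add_eq' h1
  have h2' : Jc.J (sgn Jc (Sum.inl i) • bracketVtx G i' j + sgn Jc (Sum.inl j) • bracketVtx G i k)
      = (sgn Jc (Sum.inl j) * sgn Jc (Sum.inl i)) • bracketVtx G i' k
        + (-1 : ℝ) • bracketVtx G i j := by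
    rw [h2, neg_one_smul, sub_eq_add_neg]
  have h3 := cnt_eq_of_J Jc h2'
  rw [cnt_pair hne1 (sgn_ne_zero Jc (Sum.inl i)) (sgn_ne_zero Jc (Sum.inl j)),
    cnt_pair hne2 (mul_ne_zero (sgn_ne_zero Jc (Sum.inl j)) (sgn_ne_zero Jc (Sum.inl i)))
      (by norm_num)] at h3
  exact h3

noncomputable def tau (j : V) : V :=
  match idx Jc (Sum.inl j) with
  | Sum.inl k => k
  | Sum.inr _ => j

lemma tau_inl {j k : V} (h : idx Jc (Sum.inl j) = Sum.inl k) : tau Jc j = k := by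
  simp [tau, h]

lemma tau_inr {j : V} {f : G.edgeSet} (h : idx Jc (Sum.inl j) = Sum.inr f) : tau Jc j = j := by
  simp [tau, h]

lemma idx_inl_of_inl {j k : V} (h : idx Jc (Sum.inl j) = Sum.inl k) :
    idx Jc (Sum.inl k) = Sum.inl j := by
  have h2 := idx_idx Jc (Sum.inl j)
  rw [h] at h2
  exact h2

lemma tau_ne_of_inl {j k : V} (h : idx Jc (Sum.inl j) = Sum.inl k) : k ≠ j := by
  intro e
  apply idx_ne_self Jc (Sum.inl j)
  rw [h, e]

lemma odd_iff_cast (n : ℕ) : Odd n ↔ (n : ZMod 2) = 1 := by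
  rw [Nat.odd_iff]
  constructor
  · intro h
    rw [← ZMod.natCast_mod, h, Nat.cast_one]
  · intro h
    rcases Nat.mod_two_eq_zero_or_one n with h2 | h2
    · exfalso
      rw [← ZMod.natCast_mod, h2, Nat.cast_zero] at h
      exact zero_ne_one h
    · exact h2

lemma deg_cast (v : V) :
    ((G.degree v : ℕ) : ZMod 2) = ∑ j : V, (if G.Adj v j then (1 : ZMod 2) else 0) := by
  have h1 : G.degree v = ∑ j : V, (if G.Adj v j then 1 else 0) := by
    rw [SimpleGraph.degree, SimpleGraph.neighborFinset_eq_filter, Finset.card_filter]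
  rw [h1, Nat.cast_sum]
  exact Finset.sum_congr rfl fun j _ => by split_ifs <;> simp

end JStuff

/-- If `w` is a vertex of `G` of odd degree, then `±Jw` is a vertex of
`G` of odd degree; in particular the set of odd-degree vertices is invariant under `J`
up to sign. -/
theorem statement8 (Jc : AdaptedCS G) (w : V) (hw : Odd (G.degree w)) :
    ∃ w' : V, Odd (G.degree w') ∧
      (Jc.J (vtx G w) = vtx G w' ∨ Jc.J (vtx G w) = - vtx G w') := by
  classical
  have hw1 : ((G.degree w : ℕ) : ZMod 2) = 1 := (odd_iff_cast _).mp hw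
  rcases hcase : idx Jc (Sum.inl w) with w' | f
  · -- `J` sends the vertex `w` to `± w'`
    have hww' : w' ≠ w := tau_ne_of_inl Jc hcase
    have hback : idx Jc (Sum.inl w') = Sum.inl w := idx_inl_of_inl Jc hcase
    have hsum : ∑ j : V, ((if G.Adj w j then (1 : ZMod 2) else 0)
        + (if G.Adj w' j then (1 : ZMod 2) else 0)) = 0 := by
      refine Finset.sum_ninvolution (tau Jc) ?_ ?_ (fun a => Finset.mem_univ (tau Jc a)) ?_
      · intro a
        rcases ha : idx Jc (Sum.inl a) with k | f
        · rw [tau_inl Jc ha]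
          by_cases haw : a = w
          · subst haw
            have hk : k = w' := Sum.inl_injective (ha.symm.trans hcase)
            subst hk
            by_cases p : G.Adj a k
            · have p' : G.Adj k a := p.symm
              simp [p, p', SimpleGraph.irrefl, CharTwo.add_self_eq_zero]
            · have p' : ¬ G.Adj k a := fun q => p q.symm
              simp [p, p', SimpleGraph.irrefl]
          · by_cases haw' : a = w'
            · subst haw'
              have hk : k = w := Sum.inl_injective (ha.symm.trans hback)
              subst hk
              by_cases p : G.Adj a k
              · have p' : G.Adj k a := p.symm
                simp [p, p', SimpleGraph.irrefl, CharTwo.add_self_eq_zero]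
              · have p' : ¬ G.Adj k a := fun q => p q.symm
                simp [p, p', SimpleGraph.irrefl]
            · have hkw : k ≠ w := by
                intro e
                subst e
                have h2 := idx_inl_of_inl Jc ha
                rw [hcase] at h2
                exact haw' (Sum.inl_injective h2.symm)
              have hkw' : k ≠ w' := by
                intro e
                subst e
                have h2 : (Sum.inl a : V ⊕ G.edgeSet) = Sum.inl w :=
                  idx_inj Jc (ha.trans hcase.symm)
                exact haw (Sum.inl_injective h2)
              have hC := scenarioC Jc hcase ha ?_ ?_
              · by_cases p1 : G.Adj w a <;> by_cases p2 : G.Adj w' a <;>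
                  by_cases p3 : G.Adj w k <;> by_cases p4 : G.Adj w' k <;>
                  simp [p1, p2, p3, p4] at hC ⊢ <;> decide
              · intro hss
                rcases Sym2.eq_iff.mp hss with ⟨e1, _⟩ | ⟨e1, _⟩
                · exact hww' e1
                · exact hkw' e1.symm
              · intro hss
                rcases Sym2.eq_iff.mp hss with ⟨e1, _⟩ | ⟨e1, _⟩
                · exact hww' e1
                · exact haw' e1.symm
        · rw [tau_inr Jc ha]
          exact CharTwo.add_self_eq_zero _
      · intro a hfa
        rcases ha : idx Jc (Sum.inl a) with k | f
        · rw [tau_inl Jc ha]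
          exact tau_ne_of_inl Jc ha
        · exfalso
          apply hfa
          have hiff := scenarioB Jc hcase ha
          by_cases p : G.Adj w a
          · simp [p, hiff.mp p, CharTwo.add_self_eq_zero]
          · simp [p, mt hiff.mpr p]
      · intro a
        rcases ha : idx Jc (Sum.inl a) with k | f
        · rw [tau_inl Jc ha, tau_inl Jc (idx_inl_of_inl Jc ha)]
        · rw [tau_inr Jc ha, tau_inr Jc ha]
    rw [Finset.sum_add_distrib, ← deg_cast, ← deg_cast, hw1] at hsum
    have hdeg' : ((G.degree w' : ℕ) : ZMod 2) = 1 := by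
      have h2 : ((G.degree w' : ℕ) : ZMod 2) = -1 := by
        have h3 := congrArg (fun z => z - 1) hsum
        linear_combination hsum
      rw [h2]
      decide
    refine ⟨w', (odd_iff_cast _).mpr hdeg', ?_⟩
    have hJw : Jc.J (vtx G w) = sgn Jc (Sum.inl w) • vtx G w' := by
      rw [vtx_def, J_basis Jc (Sum.inl w), hcase, ← vtx_def]
    rcases sgn_eq Jc (Sum.inl w) with hs | hs
    · left
      rw [hJw, hs, one_smul]
    · right
      rw [hJw, hs]
      simp
  · -- `J` cannot send an odd vertex to an edge
    exfalso
    have hsum : ∑ j : V, (if G.Adj w j then (1 : ZMod 2) else 0) = 0 := by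
      refine Finset.sum_ninvolution (tau Jc) ?_ ?_ (fun a => Finset.mem_univ (tau Jc a)) ?_
      · intro a
        rcases ha : idx Jc (Sum.inl a) with k | f'
        · rw [tau_inl Jc ha]
          have hiff := scenarioA2 Jc hcase ha
          by_cases p : G.Adj w a
          · simp [p, hiff.mp p, CharTwo.add_self_eq_zero]
          · simp [p, mt hiff.mpr p]
        · rw [tau_inr Jc ha]
          exact CharTwo.add_self_eq_zero _
      · intro a hfa
        rcases ha : idx Jc (Sum.inl a) with k | f'
        · rw [tau_inl Jc ha]
          exact tau_ne_of_inl Jc ha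
        · exact absurd (if_neg (scenarioA1 Jc hcase ha)) hfa
      · intro a
        rcases ha : idx Jc (Sum.inl a) with k | f'
        · rw [tau_inl Jc ha, tau_inl Jc (idx_inl_of_inl Jc ha)]
        · rw [tau_inr Jc ha, tau_inr Jc ha]
    rw [← deg_cast, hw1] at hsum
    exact one_ne_zero hsum

end Aux


end GraphLie
end
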